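/- Live opacity supports early release: there exists a live opaque history H (with unique writes) and a transaction T_i in H such that T_i releases some variable early in H. -/

import Mathlib

/-!
Formal model of transactional memory (TM) histories, following Siek &
Wojciechowski, "Last-use Opacity: A Strong Safety Property for Transactional
Memory with Early Release Support".

Transactions and shared variables are indexed by natural numbers; values of
variables are natural numbers with initial value 0.
-/

namespace TM

open Classical

/-- Transactional operations: `init`, read of a variable, write of a value to
a variable, `tryCommit` and `tryAbort`. -/
inductive Op : Type
  | init : Op
  | read : ℕ → Op
  | write : ℕ → ℕ → Op
  | tryCommit : Op
  | tryAbort : Op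
  deriving DecidableEq

/-- Responses: `ok`, a value (for reads), commit `C_i`, abort `A_i`. -/
inductive Resp : Type
  | ok : Resp
  | value : ℕ → Resp
  | committed : Resp
  | aborted : Resp
  deriving DecidableEq

/-- Invocation and response events, tagged with the transaction executing them. -/
inductive Event : Type
  | inv : ℕ → Op → Event
  | res : ℕ → Resp → Event
  deriving DecidableEq

/-- The transaction executing an event. -/
def Event.txn : Event → ℕ
  | .inv t _ => t
  | .res t _ => t

/-- A history is a finite sequence of events. -/
abbrev History := List Event

/-- `proj i H` is `H|T_i`, the subsequence of events of transaction `i`. -/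
def proj (i : ℕ) (H : History) : History :=
  H.filter (fun e => e.txn == i)

/-- Transaction `i` is in `H` (`H|T_i ≠ ∅`). -/
def inTxn (H : History) (i : ℕ) : Prop := proj i H ≠ []

/-- `T_i` is committed in `H`: `H|T_i` contains `tryC_i → C_i`. -/
def committed (H : History) (i : ℕ) : Prop :=
  List.Sublist [Event.inv i Op.tryCommit, Event.res i Resp.committed] (proj i H)

/-- `T_i` is aborted in `H`: `H|T_i` contains a response `A_i`. -/
def aborted (H : History) (i : ℕ) : Prop :=
  Event.res i Resp.aborted ∈ proj i H

/-- `T_i` is commit-pending in `H`. -/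
def commitPending (H : History) (i : ℕ) : Prop :=
  Event.inv i Op.tryCommit ∈ proj i H ∧
    Event.res i Resp.committed ∉ proj i H ∧ Event.res i Resp.aborted ∉ proj i H

/-- `T_i` is live in `H`. -/
def live (H : History) (i : ℕ) : Prop :=
  inTxn H i ∧ ¬ committed H i ∧ ¬ aborted H i ∧ ¬ commitPending H i

/-- A complete operation execution by transaction `i` in `H`: the invocation
is at position `ki`, its matching response at position `kr` (no events of `i`
in between). -/
def opExec (H : History) (i ki kr : ℕ) (o : Op) (r : Resp) : Prop :=
  ki < kr ∧ H[ki]? = some (Event.inv i o) ∧ H[kr]? = some (Event.res i r) ∧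
    ∀ (m : ℕ) (e : Event), ki < m → m < kr → H[m]? = some e → e.txn ≠ i

def isInvEvent : Event → Prop
  | .inv _ _ => True
  | .res _ _ => False

def isResEvent : Event → Prop
  | .inv _ _ => False
  | .res _ _ => True

/-- Well-formedness of `H|T_i` (as the list `L`): alternation of invocations
and responses starting with `init_i`, no events after a commit/abort response,
and no invocation after an invocation of `tryC_i` or `tryA_i`. -/
def wellFormedTxn (L : History) (i : ℕ) : Prop :=
  (∀ (k : ℕ) (e : Event), L[k]? = some e →
      ((k % 2 = 0 → isInvEvent e) ∧ (k % 2 = 1 → isResEvent e))) ∧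
  (L ≠ [] → L[0]? = some (Event.inv i Op.init)) ∧
  (∀ k : ℕ, (L[k]? = some (Event.res i Resp.committed) ∨
      L[k]? = some (Event.res i Resp.aborted)) → L.length = k + 1) ∧
  (∀ (k : ℕ) (o : Op), L[k]? = some (Event.inv i o) → (o = Op.tryCommit ∨ o = Op.tryAbort) →
      ∀ (m : ℕ) (o' : Op), L[m]? = some (Event.inv i o') → m ≤ k)

/-- A well-formed history. -/
def wellFormed (H : History) : Prop :=
  ∀ i : ℕ, wellFormedTxn (proj i H) i

/-- Unique writes: distinct write executions write distinct values, all
different from the initial value 0. -/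
def uniqueWrites (H : History) : Prop :=
  ∀ (k1 k2 i1 i2 x1 x2 v1 v2 : ℕ),
    H[k1]? = some (Event.inv i1 (Op.write x1 v1)) →
    H[k2]? = some (Event.inv i2 (Op.write x2 v2)) →
    v1 ≠ 0 ∧ (k1 ≠ k2 → v1 ≠ v2)

/-- Two histories are equivalent if they agree on every `H|T_i`. -/
def equivH (H1 H2 : History) : Prop := ∀ i : ℕ, proj i H1 = proj i H2

/-- Real-time precedence: the last event of `H|T_i` precedes the first event
of `H|T_j` in `H`. -/
def rtPrec (H : History) (i j : ℕ) : Prop :=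
  ∃ k l : ℕ, k < l ∧
    (∃ e : Event, H[k]? = some e ∧ e.txn = i) ∧
    (∃ e : Event, H[l]? = some e ∧ e.txn = j) ∧
    (∀ (m : ℕ) (e : Event), H[m]? = some e → e.txn = i → m ≤ k) ∧
    (∀ (m : ℕ) (e : Event), H[m]? = some e → e.txn = j → l ≤ m)

/-- `S` preserves the real-time order of `H`. -/
def preservesRT (H S : History) : Prop := ∀ i j : ℕ, rtPrec H i j → rtPrec S i j

/-- A sequential history: any two distinct transactions are comparable in the
real-time order. -/
def sequential (S : History) : Prop :=
  ∀ i j : ℕ, inTxn S i → inTxn S j → i ≠ j → rtPrec S i j ∨ rtPrec S j i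

/-- The read of value `v` on variable `x` invoked at position `ki` is
consistent with the sequential specification of `x`: the latest write to `x`
completed before it writes `v`, or there is no such write and `v = 0`. -/
def readsLegally (S : History) (x v ki : ℕ) : Prop :=
  (∃ j kwi kwr : ℕ, kwr < ki ∧ opExec S j kwi kwr (Op.write x v) Resp.ok ∧
      ∀ j' v' kwi' kwr' : ℕ,
        opExec S j' kwi' kwr' (Op.write x v') Resp.ok → kwr' < ki → kwr' ≤ kwr)
  ∨ (v = 0 ∧ ∀ j v' kwi kwr : ℕ, opExec S j kwi kwr (Op.write x v') Resp.ok → ¬ kwr < ki)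

/-- A (sequential) history is legal if its restriction to every variable is in
the variable's sequential specification, i.e. every complete read is
consistent with the latest preceding write. -/
def isLegal (S : History) : Prop :=
  ∀ i x v ki kr : ℕ, opExec S i ki kr (Op.read x) (Resp.value v) → readsLegally S x v ki

/-- Transaction `i` has the pending (unanswered) invocation of `o` in `H`. -/
def pendingInv (H : History) (i : ℕ) (o : Op) : Prop :=
  (proj i H).getLast? = some (Event.inv i o)

/-- `C` is a completion `Compl(H)` of `H`. -/
def isCompletion (H C : History) : Prop :=
  H <+: C ∧
  (∀ i : ℕ, inTxn C i → inTxn H i) ∧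
  (∀ i : ℕ, inTxn C i → committed C i ∨ aborted C i) ∧
  ∀ i : ℕ, inTxn H i →
    ((committed H i ∨ aborted H i) → proj i C = proj i H) ∧
    (¬ committed H i → ¬ aborted H i →
      (pendingInv H i Op.tryCommit →
          proj i C = proj i H ++ [Event.res i Resp.committed]) ∧
      ((∃ o : Op, o ≠ Op.tryCommit ∧ pendingInv H i o) →
          proj i C = proj i H ++ [Event.res i Resp.aborted]) ∧
      ((¬ ∃ o : Op, pendingInv H i o) →
          proj i C = proj i H ++ [Event.inv i Op.tryCommit, Event.res i Resp.aborted]))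

/-- Restriction of a history to the events of a set of transactions. -/
noncomputable def restrictTxns (S : History) (T : Set ℕ) : History :=
  S.filter (fun e => decide (e.txn ∈ T))

/-- `Vis(S,T_i)`: the longest subhistory of `S` containing, for each `T_j` in
`S`, the events of `T_j` iff `j = i` or (`T_j` is committed and `T_j ≺_S T_i`). -/
noncomputable def Vis (S : History) (i : ℕ) : History :=
  restrictTxns S {j | j = i ∨ (committed S j ∧ rtPrec S j i)}

/-- `T_i` is legal in `S` if `Vis(S,T_i)` is legal. -/
def legalIn (S : History) (i : ℕ) : Prop := isLegal (Vis S i)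

/-- Serializability. -/
def serializable (H : History) : Prop :=
  ∃ C S : History, isCompletion H C ∧ sequential S ∧ equivH S C ∧
    ∀ i : ℕ, inTxn S i → committed S i → legalIn S i

/-- The read invoked at position `ki` by `T_j` on `x` is non-local: no write
to `x` by `T_j` precedes it. -/
def nonLocalReadAt (H : History) (j x ki : ℕ) : Prop :=
  ∀ m v : ℕ, m < ki → H[m]? ≠ some (Event.inv j (Op.write x v))

/-- `T_i` releases variable `x` early in `H`. -/
def releasesEarly (H : History) (i x : ℕ) : Prop :=
  ∃ P : History, P <+: H ∧ live P i ∧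
    ∃ j v wki wkr rki rkr : ℕ, j ≠ i ∧
      opExec P i wki wkr (Op.write x v) Resp.ok ∧
      opExec P j rki rkr (Op.read x) (Resp.value v) ∧
      nonLocalReadAt P j x rki ∧
      wkr < rki

/-- Overwriting by `T_i` observed by `T_j` on variable `x` in `H`. -/
def overwriting (H : History) (i j x : ℕ) : Prop :=
  i ≠ j ∧ releasesEarly H i x ∧
  ∃ v v' k1i k1r k2i k2r kri krr : ℕ,
    opExec H i k1i k1r (Op.write x v) Resp.ok ∧
    opExec H i k2i k2r (Op.write x v') Resp.ok ∧ k1r < k2i ∧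
    opExec H j kri krr (Op.read x) (Resp.value v) ∧ krr < k2i

/-- Final-state opacity. -/
def finalStateOpaque (H : History) : Prop :=
  ∃ C S : History, isCompletion H C ∧ sequential S ∧ equivH S C ∧ preservesRT H S ∧
    ∀ i : ℕ, inTxn S i → legalIn S i

/-- Opacity: every finite prefix is final-state opaque. -/
def isOpaque (H : History) : Prop := ∀ P : History, P <+: H → finalStateOpaque P

/-- Causal past of `T_i` in `H`: `T_i` together with the committed or aborted
transactions that precede `T_i` in `H`. -/
def causalPast (H : History) (i : ℕ) : Set ℕ :=
  {j | j = i ∨ ((committed H j ∨ aborted H j) ∧ rtPrec H j i)}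

/-- Virtual world consistency. -/
def VWC (H : History) : Prop :=
  (∃ S : History, sequential S ∧ equivH S (restrictTxns H {j | committed H j}) ∧
      preservesRT H S ∧ ∀ j : ℕ, inTxn S j → committed S j → legalIn S j) ∧
  (∀ i : ℕ, inTxn H i → aborted H i →
      ∃ S : History, sequential S ∧ equivH S (restrictTxns H (causalPast H i)) ∧ isLegal S)

/-! ### Live opacity -/

/-- Index `k` of `L` carries (part of) a read operation execution. -/
def isReadIdx (L : History) (k : ℕ) : Prop :=
  (∃ t x : ℕ, L[k]? = some (Event.inv t (Op.read x))) ∨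
  (1 ≤ k ∧ (∃ t x : ℕ, L[k-1]? = some (Event.inv t (Op.read x))) ∧
    ∃ (t : ℕ) (r : Resp), L[k]? = some (Event.res t r))

/-- Index `k` of `L` carries (part of) a non-local read operation execution. -/
def isNonLocalReadIdx (L : History) (k : ℕ) : Prop :=
  (∃ t x : ℕ, L[k]? = some (Event.inv t (Op.read x)) ∧
      ∀ m t' v : ℕ, m < k → L[m]? ≠ some (Event.inv t' (Op.write x v))) ∨
  (1 ≤ k ∧ (∃ (t : ℕ) (r : Resp), L[k]? = some (Event.res t r)) ∧
    ∃ t x : ℕ, L[k-1]? = some (Event.inv t (Op.read x)) ∧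
      ∀ m t' v : ℕ, m < k - 1 → L[m]? ≠ some (Event.inv t' (Op.write x v)))

/-- The subsequence of `L` of events at indices satisfying `p`. -/
noncomputable def seqOfIdx (L : History) (p : ℕ → Prop) : History :=
  ((List.range L.length).filter (fun k => decide (p k))).filterMap (fun k => L[k]?)

/-- `H|(T_i,r)`: the read operation executions of `T_i`, excluding the last
read if its response is `A_i`. -/
noncomputable def readSeq (H : History) (i : ℕ) : History :=
  let L := proj i H
  let R := seqOfIdx L (isReadIdx L)
  if R.getLast? = some (Event.res i Resp.aborted) then R.dropLast.dropLast else R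

/-- `H|(T_i,gr)`: the non-local read operation executions of `T_i`, excluding
the last read if its response is `A_i`. -/
noncomputable def grSeq (H : History) (i : ℕ) : History :=
  let L := proj i H
  let R := seqOfIdx L (isNonLocalReadIdx L)
  if R.getLast? = some (Event.res i Resp.aborted) then R.dropLast.dropLast else R

/-- The transaction `T_i^gr`. -/
noncomputable def grTxn (H : History) (i : ℕ) : History :=
  if grSeq H i = [] then []
  else [Event.inv i Op.init, Event.res i Resp.ok] ++ grSeq H i ++
       [Event.inv i Op.tryCommit, Event.res i Resp.committed]

/-- `S` justifies the serializability of `H`. -/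
def justifiesSer (S H : History) : Prop :=
  ∃ H' : History, List.Sublist H' H ∧ (∀ e ∈ H', committed H e.txn) ∧
    (∀ j : ℕ, committed H j → proj j H' = proj j H) ∧
    isLegal S ∧ equivH S H'

/-- All complete local reads of `T_i` in `H` have legal responses: the last
preceding write of `T_i` to the variable wrote the value read. -/
def localReadsLegal (H : History) (i : ℕ) : Prop :=
  ∀ x v ki kr : ℕ, opExec (proj i H) i ki kr (Op.read x) (Resp.value v) →
    (∃ m w : ℕ, m < ki ∧ (proj i H)[m]? = some (Event.inv i (Op.write x w))) →
    ∃ m : ℕ, m < ki ∧ (proj i H)[m]? = some (Event.inv i (Op.write x v)) ∧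
      ∀ m' w' : ℕ, m < m' → m' < ki → (proj i H)[m']? ≠ some (Event.inv i (Op.write x w'))

/-- Live opacity. -/
def liveOpaque (H : History) : Prop :=
  ∃ S : History, sequential S ∧ preservesRT H S ∧ justifiesSer S H ∧
    (∃ S' : History, sequential S' ∧ List.Sublist S S' ∧
      (∀ i : ℕ, inTxn H i → ¬ inTxn S i → proj i S' = grTxn H i) ∧
      (∀ i j : ℕ, rtPrec H i j → inTxn S' i → inTxn S' j → rtPrec S' i j) ∧
      isLegal S') ∧
    (∀ i : ℕ, inTxn H i → ¬ inTxn S i → localReadsLegal H i)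

/-! ### Last-use opacity -/

/-- A prefix-closed set of histories (the possible histories of a program). -/
def prefixClosed (E : Set History) : Prop :=
  ∀ H ∈ E, ∀ P : History, P <+: H → P ∈ E

/-- The write execution on `x` by `T_i` at positions `(ki,kr)` is the closing
("last") write on `x` by `T_i` in `H` with respect to the possible histories
`E`: in no extension of `H` in `E` does `T_i` invoke another write on `x`
after it. -/
def closingWrite (E : Set History) (H : History) (i x v ki kr : ℕ) : Prop :=
  opExec H i ki kr (Op.write x v) Resp.ok ∧
  ∀ H' ∈ E, H <+: H' → ∀ m v' : ℕ, H'[m]? = some (Event.inv i (Op.write x v')) → m ≤ ki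

/-- `T_i` decided on `x` in `H` (w.r.t. `E`). -/
def decidedOn (E : Set History) (H : History) (i x : ℕ) : Prop :=
  ∃ v ki kr : ℕ, closingWrite E H i x v ki kr

/-- The variable accessed by an operation. -/
def opVar : Op → Option ℕ
  | .read x => some x
  | .write x _ => some x
  | _ => none

/-- The variable accessed by the event at index `k` of `L` (for a response,
the variable of the matching invocation at `k-1`). -/
def eventVarAt (L : History) (k : ℕ) : Option ℕ :=
  match L[k]? with
  | some (Event.inv _ o) => opVar o
  | some (Event.res _ _) =>
      match L[k-1]? with
      | some (Event.inv _ o) => opVar o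
      | _ => none
  | none => none

/-- The operation execution starting at index `k` of `L` is complete. -/
def completeAt (L : History) (k : ℕ) : Prop :=
  ∀ (t : ℕ) (o : Op), L[k]? = some (Event.inv t o) →
    ∃ (t' : ℕ) (r : Resp), L[k+1]? = some (Event.res t' r)

/-- `Hs⌊T_i` (decided transaction subhistory): the subsequence of `Hs|T_i`
consisting of `init_i` and all complete operation executions on variables on
which `T_i` decided (decidedness judged in `Hd` w.r.t. `E`). -/
noncomputable def lastUseProj (E : Set History) (Hd Hs : History) (i : ℕ) : History :=
  let L := proj i Hs
  seqOfIdx L (fun k => completeAt L k ∧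
    (k ≤ 1 ∨ ∃ x : ℕ, eventVarAt L k = some x ∧ decidedOn E Hd i x))

/-- `Hs⌊^T_i = Hs⌊T_i · [tryC_i → C_i]`. -/
noncomputable def lastUseProjC (E : Set History) (Hd Hs : History) (i : ℕ) : History :=
  lastUseProj E Hd Hs i ++ [Event.inv i Op.tryCommit, Event.res i Resp.committed]

/-- Transactions of a history in order of first occurrence. -/
def txnOrder : History → List ℕ
  | [] => []
  | e :: t => e.txn :: (txnOrder t).filter (fun j => j ≠ e.txn)

/-- The candidate `LUVis(S,T_i)` determined by a choice `inc` of which decided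
non-committed transactions to include: for each transaction `j` of `S` in
order, all of `S|T_j` if `j = i` or `T_j` is committed in `S` and `T_j ≺_S T_i`;
`S⌊^T_j` if `T_j` is non-committed, decided on some variable in `H`,
`T_j ≺_S T_i`, not `T_j ≺_H T_i`, and `inc j` holds; nothing otherwise. -/
noncomputable def buildLUVis (E : Set History) (H S : History) (i : ℕ)
    (inc : ℕ → Prop) : History :=
  (txnOrder S).flatMap (fun j =>
    if j = i ∨ (committed S j ∧ rtPrec S j i) then proj j S
    else if ¬ committed S j ∧ (∃ x : ℕ, decidedOn E H j x) ∧ rtPrec S j i ∧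
        ¬ rtPrec H j i ∧ inc j
      then lastUseProjC E H S j
    else [])

/-- `T_i` is last-use legal in `S`: some admissible `LUVis(S,T_i)` is legal. -/
def lastUseLegal (E : Set History) (H S : History) (i : ℕ) : Prop :=
  ∃ inc : ℕ → Prop, isLegal (buildLUVis E H S i inc)

/-- Final-state last-use opacity with respect to `E`. -/
def finalStateLUOpaque (E : Set History) (H : History) : Prop :=
  ∃ C S : History, isCompletion H C ∧ sequential S ∧ equivH S C ∧ preservesRT H S ∧
    (∀ i : ℕ, inTxn S i → committed S i → legalIn S i) ∧
    (∀ i : ℕ, inTxn S i → ¬ committed S i → lastUseLegal E H S i)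

/-- Last-use opacity with respect to `E`: every finite prefix is final-state
last-use opaque with respect to `E`. -/
def lastUseOpaque (E : Set History) (H : History) : Prop :=
  ∀ P : History, P <+: H → finalStateLUOpaque E P

/-! ### Database conditions -/

/-- `T_j` reads from `T_i` in `H` (unique writes). -/
def readsFrom (H : History) (j i : ℕ) : Prop :=
  ∃ x v kwi kwr kri krr : ℕ,
    opExec H i kwi kwr (Op.write x v) Resp.ok ∧
    opExec H j kri krr (Op.read x) (Resp.value v)

/-- Recoverability: if `T_j` reads from `T_i` then `T_i` commits before `T_j`
commits. -/
def recoverable (H : History) : Prop :=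
  ∀ i j : ℕ, i ≠ j → readsFrom H j i →
    ∀ kc' : ℕ, H[kc']? = some (Event.res j Resp.committed) →
      ∃ kc : ℕ, kc < kc' ∧ H[kc]? = some (Event.res i Resp.committed)

/-- Avoiding cascading aborts: whenever `T_j` reads `x` from `T_i`, the commit
response `C_i` precedes the read. -/
def ACA (H : History) : Prop :=
  ∀ i j x v kwi kwr kri krr : ℕ, i ≠ j →
    opExec H i kwi kwr (Op.write x v) Resp.ok →
    opExec H j kri krr (Op.read x) (Resp.value v) →
    ∃ m : ℕ, m < kri ∧ H[m]? = some (Event.res i Resp.committed)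

/-- Strictness. -/
def strictH (H : History) : Prop :=
  ∀ i j : ℕ, i ≠ j → ∀ x v v' ki kr kwi kwr : ℕ,
    (opExec H i ki kr (Op.read x) (Resp.value v) ∨ opExec H i ki kr (Op.write x v') Resp.ok) →
    opExec H j kwi kwr (Op.write x v) Resp.ok →
    kwr < ki →
    ∃ m : ℕ, m < ki ∧
      (H[m]? = some (Event.res j Resp.committed) ∨ H[m]? = some (Event.res j Resp.aborted))

end TM

namespace TM

/-!
`T₁` writes `1` to variable `0` and `T₂` reads this value while `T₁` is still live, so `T₁`
releases the variable early; afterwards both commit. Since every transaction commits, live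
opacity only asks for a legal sequential history equivalent to `H` that preserves its
real-time order. `T₁ · T₂` is one: the two transactions overlap, so the real-time order of
`H` is empty.
-/

lemma proj_eq_nil_of_forall_mem {H : History} {i : ℕ} (h : ∀ e ∈ H, e.txn ≠ i) :
    proj i H = [] := by
  simpa [proj, List.filter_eq_nil_iff] using h

lemma txn_eq_of_inTxn {H : History} {i : ℕ} (h : inTxn H i) : ∃ e ∈ H, e.txn = i := by
  by_contra! hne
  exact h (proj_eq_nil_of_forall_mem hne)

lemma rtPrec.lt {H : History} {i j a b : ℕ} {e e' : Event} (h : rtPrec H i j)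
    (ha : H[a]? = some e) (hi : e.txn = i) (hb : H[b]? = some e') (hj : e'.txn = j) :
    a < b := by
  obtain ⟨k, l, hkl, -, -, hlast, hfirst⟩ := h
  have := hlast a e ha hi
  have := hfirst b e' hb hj
  omega

lemma rtPrec.exists_mem {H : History} {i j : ℕ} (h : rtPrec H i j) :
    (∃ e ∈ H, e.txn = i) ∧ ∃ e ∈ H, e.txn = j := by
  obtain ⟨k, l, -, ⟨e, hk, hi⟩, ⟨e', hl, hj⟩, -⟩ := h
  exact ⟨⟨e, List.mem_of_getElem? hk, hi⟩, ⟨e', List.mem_of_getElem? hl, hj⟩⟩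

lemma rtPrec_append {A B : History} {i j : ℕ} (hA : ∀ e ∈ A, e.txn = i)
    (hB : ∀ e ∈ B, e.txn = j) (hA₀ : A ≠ []) (hB₀ : B ≠ []) (hij : i ≠ j) :
    rtPrec (A ++ B) i j := by
  have hlen : 0 < A.length := List.length_pos_of_ne_nil hA₀
  have hside : ∀ (m : ℕ) (e : Event), (A ++ B)[m]? = some e →
      (m < A.length ∧ e.txn = i) ∨ (A.length ≤ m ∧ e.txn = j) := by
    intro m e hm
    rcases lt_or_ge m A.length with hm' | hm'
    · rw [List.getElem?_append_left hm'] at hm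
      exact .inl ⟨hm', hA e (List.mem_of_getElem? hm)⟩
    · rw [List.getElem?_append_right hm'] at hm
      exact .inr ⟨hm', hB e (List.mem_of_getElem? hm)⟩
  refine ⟨A.length - 1, A.length, by omega, ?_, ?_, ?_, ?_⟩
  · have hlast : A.length - 1 < A.length := by omega
    exact ⟨A.getLast hA₀, by simp [List.getElem?_append_left hlast, List.getLast_eq_getElem],
      hA _ (List.getLast_mem hA₀)⟩
  · exact ⟨B.head hB₀, by simp [List.getElem?_append_right, List.head_eq_getElem],
      hB _ (List.head_mem hB₀)⟩
  · intro m e hm he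
    rcases hside m e hm with h | h
    · omega
    · exact absurd (he.symm.trans h.2) hij
  · intro m e hm he
    rcases hside m e hm with h | h
    · exact absurd (h.2.symm.trans he) hij
    · exact h.1

lemma sequential_append {A B : History} {i j : ℕ} (hA : ∀ e ∈ A, e.txn = i)
    (hB : ∀ e ∈ B, e.txn = j) (hA₀ : A ≠ []) (hB₀ : B ≠ []) (hij : i ≠ j) :
    sequential (A ++ B) := by
  have htxn : ∀ t, inTxn (A ++ B) t → t = i ∨ t = j := by
    intro t ht
    obtain ⟨e, he, rfl⟩ := txn_eq_of_inTxn ht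
    rcases List.mem_append.mp he with he | he
    · exact .inl (hA e he)
    · exact .inr (hB e he)
  intro s t hs ht hst
  rcases htxn s hs with rfl | rfl <;> rcases htxn t ht with rfl | rfl
  · exact absurd rfl hst
  · exact .inl (rtPrec_append hA hB hA₀ hB₀ hij)
  · exact .inr (rtPrec_append hA hB hA₀ hB₀ hij)
  · exact absurd rfl hst

lemma liveOpaque_of_serialization {H S : History} (hcom : ∀ e ∈ H, committed H e.txn)
    (hseq : sequential S) (hrt : preservesRT H S) (hleg : isLegal S) (heq : equivH S H) :
    liveOpaque H := by
  -- `S` contains every transaction of `H`, so the clauses on `T_i^gr` and local reads are vacuous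
  have hS : ∀ i, inTxn H i → inTxn S i := fun i hi => by rwa [inTxn, heq i]
  refine ⟨S, hseq, hrt, ⟨H, List.Sublist.refl H, hcom, fun _ _ => rfl, hleg, heq⟩,
    ⟨S, hseq, List.Sublist.refl S, fun i hH hnS => absurd (hS i hH) hnS,
      fun i j hij _ _ => hrt i j hij, hleg⟩,
    fun i hH hnS => absurd (hS i hH) hnS⟩

def singleOpTxn (i : ℕ) (o : Op) (r : Resp) : History :=
  [Event.inv i Op.init, Event.res i Resp.ok, Event.inv i o, Event.res i r,
   Event.inv i Op.tryCommit, Event.res i Resp.committed]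

lemma txn_of_mem_singleOpTxn {i : ℕ} {o : Op} {r : Resp} :
    ∀ e ∈ singleOpTxn i o r, e.txn = i := by
  simp [singleOpTxn, Event.txn]

lemma wellFormedTxn_nil (i : ℕ) : wellFormedTxn [] i := by
  simp [wellFormedTxn]

lemma wellFormedTxn_singleOpTxn {i : ℕ} {o : Op} {r : Resp}
    (ho : o ≠ .tryCommit ∧ o ≠ .tryAbort) (hr : r ≠ .committed ∧ r ≠ .aborted) :
    wellFormedTxn (singleOpTxn i o r) i := by
  refine ⟨?_, fun _ => rfl, ?_, ?_⟩
  · intro k e hk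
    have : k < 6 := (List.getElem?_eq_some_iff.mp hk).1
    interval_cases k <;> simp [singleOpTxn] at hk <;> simp [← hk, isInvEvent, isResEvent]
  · intro k hk
    have : k < 6 := by rcases hk with hk | hk <;> exact (List.getElem?_eq_some_iff.mp hk).1
    interval_cases k <;> simp_all [singleOpTxn]
  · intro k o' hk ho' m o'' hm
    have : k < 6 := (List.getElem?_eq_some_iff.mp hk).1
    have : m < 6 := (List.getElem?_eq_some_iff.mp hm).1
    interval_cases k <;> simp only [singleOpTxn] at hk <;> simp at hk <;> subst hk
    · simp at ho'
    · exact absurd ho' (by tauto)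
    · interval_cases m <;> simp [singleOpTxn] at hm ⊢

lemma committed_of_proj_eq_singleOpTxn {H : History} {i : ℕ} {o : Op} {r : Resp}
    (h : proj i H = singleOpTxn i o r) : committed H i := by
  rw [committed, h]
  exact List.sublist_append_right [_, _, _, _] _

lemma proj_singleOpTxn (i j : ℕ) (o : Op) (r : Resp) :
    proj j (singleOpTxn i o r) = if j = i then singleOpTxn i o r else [] := by
  split_ifs with h
  · exact List.filter_eq_self.mpr (by simp [singleOpTxn, Event.txn, h])
  · exact proj_eq_nil_of_forall_mem fun e he => txn_of_mem_singleOpTxn e he ▸ Ne.symm h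

def writer : History := singleOpTxn 1 (.write 0 1) .ok

def reader : History := singleOpTxn 2 (.read 0) (.value 1)

def serialized : History := writer ++ reader

def interleaved : History :=
  [Event.inv 1 Op.init, Event.res 1 Resp.ok,
   Event.inv 1 (Op.write 0 1), Event.res 1 Resp.ok,
   Event.inv 2 Op.init, Event.res 2 Resp.ok,
   Event.inv 2 (Op.read 0), Event.res 2 (Resp.value 1),
   Event.inv 1 Op.tryCommit, Event.res 1 Resp.committed,
   Event.inv 2 Op.tryCommit, Event.res 2 Resp.committed]

lemma txn_mem_interleaved : ∀ e ∈ interleaved, e.txn = 1 ∨ e.txn = 2 := by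
  decide

lemma proj_serialized (i : ℕ) :
    proj i serialized = (if i = 1 then writer else []) ++ if i = 2 then reader else [] := by
  simp only [serialized, proj, List.filter_append]
  rw [← proj, ← proj, writer, reader, proj_singleOpTxn, proj_singleOpTxn]

lemma equivH_serialized_interleaved : equivH serialized interleaved := by
  intro i
  rcases eq_or_ne i 1 with rfl | h1
  · decide
  rcases eq_or_ne i 2 with rfl | h2
  · decide
  rw [proj_serialized, if_neg h1, if_neg h2]
  refine (proj_eq_nil_of_forall_mem fun e he => ?_).symm
  have := txn_mem_interleaved e he
  omega

lemma wellFormed_interleaved : wellFormed interleaved := by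
  intro i
  rw [← equivH_serialized_interleaved i, proj_serialized]
  split_ifs with h1 h2 h2
  · omega
  · subst h1
    exact wellFormedTxn_singleOpTxn (o := .write 0 1) (r := .ok) (by simp) (by simp)
  · subst h2
    exact wellFormedTxn_singleOpTxn (o := .read 0) (r := .value 1) (by simp) (by simp)
  · exact wellFormedTxn_nil i

lemma uniqueWrites_interleaved : uniqueWrites interleaved := by
  intro k1 k2 i1 i2 x1 x2 v1 v2 h1 h2
  have : k1 < 12 := (List.getElem?_eq_some_iff.mp h1).1
  have : k2 < 12 := (List.getElem?_eq_some_iff.mp h2).1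
  interval_cases k1 <;> simp [interleaved] at h1
  interval_cases k2 <;> simp [interleaved] at h2
  exact ⟨by omega, fun h => absurd rfl h⟩

lemma not_rtPrec_interleaved (i j : ℕ) : ¬ rtPrec interleaved i j := by
  intro h
  obtain ⟨⟨e, he, rfl⟩, ⟨e', he', rfl⟩⟩ := h.exists_mem
  rcases txn_mem_interleaved e he with hi | hi <;>
    rcases txn_mem_interleaved e' he' with hj | hj <;> rw [hi, hj] at h
  · exact lt_irrefl 0 (h.lt (a := 0) (b := 0) rfl rfl rfl rfl)
  · exact absurd (h.lt (a := 9) (b := 4) rfl rfl rfl rfl) (by omega)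
  · exact absurd (h.lt (a := 11) (b := 0) rfl rfl rfl rfl) (by omega)
  · exact lt_irrefl 4 (h.lt (a := 4) (b := 4) rfl rfl rfl rfl)

lemma isLegal_serialized : isLegal serialized := by
  rintro i x v ki kr ⟨-, hki, hkr, -⟩
  have : ki < 12 := (List.getElem?_eq_some_iff.mp hki).1
  have : kr < 12 := (List.getElem?_eq_some_iff.mp hkr).1
  interval_cases ki <;> simp [serialized, writer, reader, singleOpTxn] at hki
  obtain ⟨rfl, rfl⟩ := hki
  interval_cases kr <;> simp [serialized, writer, reader, singleOpTxn] at hkr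
  subst hkr
  refine .inl ⟨1, 2, 3, by omega, ⟨by omega, rfl, rfl, fun m e _ _ _ => by omega⟩, ?_⟩
  rintro j' v' kwi' kwr' ⟨-, hwi, hwr, -⟩ hlt
  have : kwi' < 12 := (List.getElem?_eq_some_iff.mp hwi).1
  interval_cases kwi' <;> simp [serialized, writer, reader, singleOpTxn] at hwi
  obtain ⟨rfl, -, -⟩ := hwi
  interval_cases kwr' <;> first | omega | simp [serialized, writer, reader, singleOpTxn] at hwr

lemma liveOpaque_interleaved : liveOpaque interleaved := by
  have hcom : ∀ e ∈ interleaved, committed interleaved e.txn := by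
    intro e he
    rcases txn_mem_interleaved e he with h | h <;> rw [h]
    · exact committed_of_proj_eq_singleOpTxn (o := .write 0 1) (r := .ok) (by decide)
    · exact committed_of_proj_eq_singleOpTxn (o := .read 0) (r := .value 1) (by decide)
  have hseq : sequential serialized :=
    sequential_append txn_of_mem_singleOpTxn txn_of_mem_singleOpTxn
      (List.cons_ne_nil _ _) (List.cons_ne_nil _ _) (by decide)
  exact liveOpaque_of_serialization hcom hseq
    (fun i j h => absurd h (not_rtPrec_interleaved i j))
    isLegal_serialized equivH_serialized_interleaved

lemma releasesEarly_interleaved : releasesEarly interleaved 1 0 := by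
  refine ⟨interleaved.take 8, List.take_prefix _ _, ?_,
    2, 1, 2, 3, 6, 7, by decide, ⟨by omega, rfl, rfl, fun m e _ _ _ => by omega⟩,
    ⟨by omega, rfl, rfl, fun m e _ _ _ => by omega⟩, ?_, by omega⟩
  · simp only [live, inTxn, committed, aborted, commitPending]
    decide
  · intro m v hm
    interval_cases m <;> simp [interleaved]

/-- Live opacity supports early release: there exists a live
opaque (well-formed, unique-writes) history `H` and a transaction `T_i` in
`H` that releases some variable early in `H`. -/
theorem live_opacity_supports_early_release :
    ∃ (H : History) (i x : ℕ),
      wellFormed H ∧ uniqueWrites H ∧ liveOpaque H ∧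
      inTxn H i ∧ releasesEarly H i x :=
  ⟨interleaved, 1, 0, wellFormed_interleaved, uniqueWrites_interleaved, liveOpaque_interleaved,
    by unfold inTxn; decide, releasesEarly_interleaved⟩

end TM
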